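/- arXiv:2602.02153 — 2 statements merged into one kernel-verified Lean document; each statement's English description precedes it below -/
import Mathlib

section
/- Mehler orthogonality for correlated Gaussians: let Z₁, Z₂ be independent standard Gaussian random variables, let ρ ∈ [−1, 1], and set X = Z₁ and Y = ρZ₁ + √(1−ρ²) Z₂ (so X, Y are jointly Gaussian, each standard, with correlation ρ). Then for all natural numbers m, n: E[He_m(X) · He_n(Y)] = n! · ρ^n if m = n, and E[He_m(X) · He_n(Y)] = 0 if m ≠ n. -/
/-!
Write `Y = ρ X + b Z` with `Z` standard Gaussian independent of `X` and `ρ ^ 2 + b ^ 2 = 1`.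
Gaussian integration by parts in `Z`, `E[Z f(Z)] = E[f'(Z)]`, combined with the recursion
`He (n + 1) x = x He n x - n He (n - 1) x` and `He n' = n He (n - 1)`, shows that
`E[He n (ρ x + b Z)] = ρ ^ n He n x`: the Hermite polynomials are eigenfunctions of the Mehler
semigroup. By Fubini, `E[He m X * He n Y] = ρ ^ n E[He m X * He n X]`, and the same integration by
parts lowers both indices of `E[He m X * He n X]` at once, giving `n ! δ_{mn}`.
-/

open MeasureTheory ProbabilityTheory Matrix Nat
open scoped NNReal

/-- The `n`-th probabilists' Hermite polynomial, as a function `ℝ → ℝ`. -/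
noncomputable def He (n : ℕ) (x : ℝ) : ℝ := Polynomial.aeval x (Polynomial.hermite n)

open Polynomial

namespace Polynomial

theorem derivative_hermite_succ (n : ℕ) :
    derivative (hermite (n + 1)) = (n + 1) • hermite n := by
  induction n with
  | zero => simp [hermite_zero]
  | succ n ih =>
    rw [hermite_succ (n + 1), derivative_sub, derivative_mul, derivative_X, one_mul, ih,
      derivative_smul, hermite_succ n, mul_smul_comm]
    module

end Polynomial

noncomputable def hermiteReal (n : ℕ) : ℝ[X] := (hermite n).map (Int.castRingHom ℝ)

theorem He_eq_eval_hermiteReal (n : ℕ) (x : ℝ) : He n x = (hermiteReal n).eval x := by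
  rw [He, hermiteReal, eval_map, aeval_def]
  rfl

theorem hermiteReal_zero : hermiteReal 0 = 1 := by simp [hermiteReal]

theorem derivative_hermiteReal (n : ℕ) :
    derivative (hermiteReal n) = n • hermiteReal (n - 1) := by
  cases n with
  | zero => simp [hermiteReal_zero]
  | succ n =>
    rw [hermiteReal, derivative_map, derivative_hermite_succ, nsmul_eq_mul, Polynomial.map_mul,
      Polynomial.map_natCast, ← nsmul_eq_mul]
    rfl

theorem hermiteReal_succ (n : ℕ) :
    hermiteReal (n + 1) = X * hermiteReal n - n • hermiteReal (n - 1) := by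
  rw [← derivative_hermiteReal, hermiteReal, hermite_succ, Polynomial.map_sub, Polynomial.map_mul,
    Polynomial.map_X, ← derivative_map]
  rfl

@[fun_prop]
theorem continuous_He (n : ℕ) : Continuous (He n) :=
  Polynomial.continuous_aeval (hermite n)

section GaussianPolynomialIntegral

variable {μ : ℝ} {v : ℝ≥0}

theorem integrable_eval_gaussianReal (P : ℝ[X]) :
    Integrable (fun x => P.eval x) (gaussianReal μ v) := by
  simp_rw [eval_eq_sum_range]
  exact integrable_finsetSum _ fun i _ =>
    (integrable_pow_of_mem_interior_integrableExpSet (X := fun x => x) (by simp) i).const_mul _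

theorem integrable_gaussianPDFReal_mul_eval (hv : v ≠ 0) (P : ℝ[X]) :
    Integrable (fun x => gaussianPDFReal μ v x * P.eval x) := by
  have h := integrable_eval_gaussianReal (μ := μ) (v := v) P
  rw [gaussianReal_of_var_ne_zero _ hv, integrable_withDensity_iff_integrable_smul'
    (measurable_gaussianPDF μ v) (ae_of_all _ fun _ => gaussianPDF_lt_top)] at h
  simpa only [toReal_gaussianPDF, smul_eq_mul] using h

variable (μ v) in
/-- Every polynomial is integrable against a Gaussian, so integration is a linear functional on
`ℝ[X]`; the Hermite recursions below then become linear algebra in `ℝ[X]`. -/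
noncomputable def gaussianPolyIntegral : ℝ[X] →ₗ[ℝ] ℝ where
  toFun P := ∫ x, P.eval x ∂gaussianReal μ v
  map_add' P Q := by
    simp only [eval_add]
    exact integral_add (integrable_eval_gaussianReal P) (integrable_eval_gaussianReal Q)
  map_smul' c P := by
    simp only [eval_smul, smul_eq_mul, RingHom.id_apply]
    exact integral_const_mul c _

theorem gaussianPolyIntegral_apply (P : ℝ[X]) :
    gaussianPolyIntegral μ v P = ∫ x, P.eval x ∂gaussianReal μ v := rfl

theorem hasDerivAt_gaussianPDFReal (hv : v ≠ 0) (x : ℝ) :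
    HasDerivAt (gaussianPDFReal μ v) (-((x - μ) / v) * gaussianPDFReal μ v x) x := by
  have hv' : (v : ℝ) ≠ 0 := by exact_mod_cast hv
  have hexponent : HasDerivAt (fun y => -(y - μ) ^ 2 / (2 * v)) (-((x - μ) / v)) x := by
    refine ((((hasDerivAt_id' x).sub_const μ).fun_pow 2).fun_neg.div_const _).congr_deriv ?_
    field_simp
    ring
  rw [gaussianPDFReal_def]
  exact (hexponent.exp.const_mul _).congr_deriv (by ring)

/-- Stein's identity. -/
theorem gaussianPolyIntegral_X_sub_C_mul (P : ℝ[X]) :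
    gaussianPolyIntegral μ v ((X - C μ) * P) = v * gaussianPolyIntegral μ v (derivative P) := by
  by_cases hv : v = 0
  · simp [gaussianPolyIntegral_apply, hv]
  have hQ : gaussianPolyIntegral μ v (C (v : ℝ) * derivative P - (X - C μ) * P) = 0 := by
    rw [gaussianPolyIntegral_apply, integral_gaussianReal_eq_integral_smul hv]
    refine integral_eq_zero_of_hasDerivAt_of_integrable
      (f := fun x => v * (gaussianPDFReal μ v x * P.eval x)) (fun x => ?_)
      (integrable_gaussianPDFReal_mul_eval hv _)
      ((integrable_gaussianPDFReal_mul_eval hv P).const_mul _)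
    refine (((hasDerivAt_gaussianPDFReal hv x).fun_mul (P.hasDerivAt x)).const_mul
      (v : ℝ)).congr_deriv ?_
    have hv' : (v : ℝ) ≠ 0 := by exact_mod_cast hv
    simp only [eval_sub, eval_mul, eval_C, eval_X, smul_eq_mul]
    field_simp
    ring
  rw [map_sub, C_mul', map_smul, smul_eq_mul] at hQ
  linarith

end GaussianPolynomialIntegral

theorem gaussianPolyIntegral_X_mul (P : ℝ[X]) :
    gaussianPolyIntegral 0 1 (X * P) = gaussianPolyIntegral 0 1 (derivative P) := by
  simpa using gaussianPolyIntegral_X_sub_C_mul (μ := 0) (v := 1) P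

theorem gaussianPolyIntegral_hermiteReal_succ_mul (m n : ℕ) :
    gaussianPolyIntegral 0 1 (hermiteReal (m + 1) * hermiteReal n)
      = n * gaussianPolyIntegral 0 1 (hermiteReal m * hermiteReal (n - 1)) := by
  rw [hermiteReal_succ, sub_mul, map_sub, mul_assoc, gaussianPolyIntegral_X_mul, derivative_mul,
    derivative_hermiteReal, derivative_hermiteReal, map_add, smul_mul_assoc, mul_smul_comm,
    map_nsmul, map_nsmul, nsmul_eq_mul, nsmul_eq_mul]
  ring

theorem gaussianPolyIntegral_hermiteReal_mul (m n : ℕ) :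
    gaussianPolyIntegral 0 1 (hermiteReal m * hermiteReal n)
      = if m = n then (n ! : ℝ) else 0 := by
  induction m generalizing n with
  | zero =>
    cases n with
    | zero => simp [hermiteReal_zero, gaussianPolyIntegral_apply]
    | succ n => rw [mul_comm, gaussianPolyIntegral_hermiteReal_succ_mul]; simp
  | succ m ih =>
    cases n with
    | zero => rw [gaussianPolyIntegral_hermiteReal_succ_mul]; simp
    | succ n =>
      rw [gaussianPolyIntegral_hermiteReal_succ_mul, ih, add_tsub_cancel_right]
      simp [factorial_succ]

theorem integral_He_mul_He (m n : ℕ) :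
    ∫ x, He m x * He n x ∂gaussianReal 0 1 = if m = n then (n ! : ℝ) else 0 := by
  simpa [gaussianPolyIntegral_apply, He_eq_eval_hermiteReal] using
    gaussianPolyIntegral_hermiteReal_mul m n

section Mehler

variable {ρ b : ℝ}

theorem gaussianPolyIntegral_hermiteReal_succ_comp (hρb : ρ ^ 2 + b ^ 2 = 1) (x : ℝ) (n : ℕ) :
    gaussianPolyIntegral 0 1 ((hermiteReal (n + 1)).comp (C (ρ * x) + C b * X))
      = ρ * x * gaussianPolyIntegral 0 1 ((hermiteReal n).comp (C (ρ * x) + C b * X))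
        - ρ ^ 2 * n *
          gaussianPolyIntegral 0 1 ((hermiteReal (n - 1)).comp (C (ρ * x) + C b * X)) := by
  set L : ℝ[X] := C (ρ * x) + C b * X
  have hL : derivative L = C b := by simp [L]
  have hstein : gaussianPolyIntegral 0 1 (X * (hermiteReal n).comp L)
      = b * n * gaussianPolyIntegral 0 1 ((hermiteReal (n - 1)).comp L) := by
    rw [gaussianPolyIntegral_X_mul, derivative_comp, derivative_hermiteReal, hL, nsmul_eq_mul,
      mul_comp, natCast_comp, ← C_eq_natCast, C_mul', C_mul', map_smul, map_smul, smul_eq_mul,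
      smul_eq_mul, mul_assoc]
  rw [hermiteReal_succ, sub_comp, mul_comp, X_comp, nsmul_eq_mul, mul_comp, natCast_comp, map_sub,
    add_mul, map_add, C_mul', C_mul', smul_mul_assoc, map_smul, map_smul, hstein, ← C_eq_natCast,
    C_mul', map_smul, smul_eq_mul, smul_eq_mul, smul_eq_mul]
  linear_combination (n : ℝ) * gaussianPolyIntegral 0 1 ((hermiteReal (n - 1)).comp L) * hρb

theorem gaussianPolyIntegral_hermiteReal_comp (hρb : ρ ^ 2 + b ^ 2 = 1) (x : ℝ) (n : ℕ) :
    gaussianPolyIntegral 0 1 ((hermiteReal n).comp (C (ρ * x) + C b * X))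
      = ρ ^ n * (hermiteReal n).eval x := by
  induction n using Nat.strong_induction_on with
  | _ n ih =>
    rcases n with _ | _ | n
    · simp [hermiteReal_zero, gaussianPolyIntegral_apply]
    · rw [gaussianPolyIntegral_hermiteReal_succ_comp hρb, ih 0 (by omega), hermiteReal_succ]
      simp only [zero_add, pow_one, pow_zero, CharP.cast_eq_zero, zero_smul, sub_zero, eval_mul,
        eval_X]
      ring
    · rw [gaussianPolyIntegral_hermiteReal_succ_comp hρb, ih (n + 1) (by omega),
        add_tsub_cancel_right, ih n (by omega), hermiteReal_succ (n + 1)]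
      simp only [eval_sub, eval_mul, eval_X, nsmul_eq_mul, eval_natCast, add_tsub_cancel_right]
      ring

end Mehler

theorem integral_He_mul_add_mul {ρ b : ℝ} (hρb : ρ ^ 2 + b ^ 2 = 1) (x : ℝ) (n : ℕ) :
    ∫ z, He n (ρ * x + b * z) ∂gaussianReal 0 1 = ρ ^ n * He n x := by
  simpa [gaussianPolyIntegral_apply, He_eq_eval_hermiteReal] using
    gaussianPolyIntegral_hermiteReal_comp hρb x n

theorem gaussianReal_prod_map_mul_add_mul {μ₁ μ₂ : ℝ} {v₁ v₂ : ℝ≥0} (a b : ℝ) :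
    ((gaussianReal μ₁ v₁).prod (gaussianReal μ₂ v₂)).map (fun p => a * p.1 + b * p.2)
      = gaussianReal (a * μ₁ + b * μ₂)
          (.mk (a ^ 2) (sq_nonneg a) * v₁ + .mk (b ^ 2) (sq_nonneg b) * v₂) := by
  have hmap_fst : ((gaussianReal μ₁ v₁).prod (gaussianReal μ₂ v₂)).map (fun p => a * p.1)
      = gaussianReal (a * μ₁) (.mk (a ^ 2) (sq_nonneg a) * v₁) := by
    rw [← Function.comp_def, ← Measure.map_map (measurable_const_mul a) measurable_fst,
      Measure.map_fst_prod, measure_univ, one_smul, gaussianReal_map_const_mul]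
  have hmap_snd : ((gaussianReal μ₁ v₁).prod (gaussianReal μ₂ v₂)).map (fun p => b * p.2)
      = gaussianReal (b * μ₂) (.mk (b ^ 2) (sq_nonneg b) * v₂) := by
    rw [← Function.comp_def, ← Measure.map_map (measurable_const_mul b) measurable_snd,
      Measure.map_snd_prod, measure_univ, one_smul, gaussianReal_map_const_mul]
  exact gaussianReal_add_gaussianReal_of_indepFun
    (indepFun_prod (measurable_const_mul a) (measurable_const_mul b)) hmap_fst hmap_snd

theorem measurePreserving_mul_add_mul_gaussianReal {a b : ℝ} (hab : a ^ 2 + b ^ 2 = 1) :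
    MeasurePreserving (fun p : ℝ × ℝ => a * p.1 + b * p.2)
      ((gaussianReal 0 1).prod (gaussianReal 0 1)) (gaussianReal 0 1) := by
  refine ⟨by fun_prop, ?_⟩
  rw [gaussianReal_prod_map_mul_add_mul]
  congr 1
  · ring
  · ext; simpa using hab

theorem memLp_two_eval_gaussianReal {μ : ℝ} {v : ℝ≥0} (P : ℝ[X]) :
    MemLp (fun x => P.eval x) 2 (gaussianReal μ v) :=
  (memLp_two_iff_integrable_sq (P.continuous.aestronglyMeasurable)).2 <| by
    simpa only [eval_mul, sq] using integrable_eval_gaussianReal (μ := μ) (v := v) (P * P)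

theorem integral_He_mul_He_mul_add_mul {ρ b : ℝ} (hρb : ρ ^ 2 + b ^ 2 = 1) (m n : ℕ) :
    ∫ p : ℝ × ℝ, He m p.1 * He n (ρ * p.1 + b * p.2)
        ∂(gaussianReal 0 1).prod (gaussianReal 0 1)
      = ρ ^ n * if m = n then (n ! : ℝ) else 0 := by
  have hint : Integrable (fun p : ℝ × ℝ => He m p.1 * He n (ρ * p.1 + b * p.2))
      ((gaussianReal 0 1).prod (gaussianReal 0 1)) := by
    simp_rw [He_eq_eval_hermiteReal]
    exact ((memLp_two_eval_gaussianReal _).comp_measurePreserving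
      measurePreserving_fst).integrable_mul ((memLp_two_eval_gaussianReal _).comp_measurePreserving
        (measurePreserving_mul_add_mul_gaussianReal hρb))
  rw [integral_prod _ hint]
  simp_rw [integral_const_mul, integral_He_mul_add_mul hρb, mul_left_comm _ (ρ ^ n),
    integral_const_mul, integral_He_mul_He]

/-- Mehler orthogonality for correlated standard Gaussians with correlation `ρ`. -/
theorem mehler_orthogonality {Ω : Type*} [MeasurableSpace Ω] (μ : Measure Ω)
    [IsProbabilityMeasure μ] (Z₁ Z₂ : Ω → ℝ) (hZ₁m : Measurable Z₁) (hZ₂m : Measurable Z₂)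
    (hZ₁ : μ.map Z₁ = gaussianReal 0 1) (hZ₂ : μ.map Z₂ = gaussianReal 0 1)
    (hindep : IndepFun Z₁ Z₂ μ) (ρ : ℝ) (hρ : ρ ∈ Set.Icc (-1 : ℝ) 1)
    (X Y : Ω → ℝ) (hX : X = Z₁)
    (hY : Y = fun ω => ρ * Z₁ ω + Real.sqrt (1 - ρ ^ 2) * Z₂ ω) (m n : ℕ) :
    (m = n → ∫ ω, He m (X ω) * He n (Y ω) ∂μ = (n ! : ℝ) * ρ ^ n) ∧
    (m ≠ n → ∫ ω, He m (X ω) * He n (Y ω) ∂μ = 0) := by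
  subst X Y
  have hρb : ρ ^ 2 + √(1 - ρ ^ 2) ^ 2 = 1 := by
    rw [Real.sq_sqrt (by nlinarith [hρ.1, hρ.2])]
    ring
  have hlaw :
      μ.map (fun ω => (Z₁ ω, Z₂ ω)) = (gaussianReal 0 1).prod (gaussianReal 0 1) := by
    rw [(indepFun_iff_map_prod_eq_prod_map_map hZ₁m.aemeasurable hZ₂m.aemeasurable).1 hindep,
      hZ₁, hZ₂]
  have key : ∫ ω, He m (Z₁ ω) * He n (ρ * Z₁ ω + √(1 - ρ ^ 2) * Z₂ ω) ∂μ
      = ρ ^ n * if m = n then (n ! : ℝ) else 0 := by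
    rw [← integral_He_mul_He_mul_add_mul hρb, ← hlaw,
      integral_map (by fun_prop) (Continuous.aestronglyMeasurable (by fun_prop))]
  refine ⟨fun h => ?_, fun h => ?_⟩ <;> rw [key] <;> simp [h, mul_comm]
end

section
/- Explicit fourth-cumulant (excess kurtosis) control by the second Hermite coefficient: let Z be a standard Gaussian random variable and let X = c₀ + c₁ Z + c₂(Z² − 1) for real c₀, c₁, c₂. Then the fourth cumulant of X, namely E[(X − E[X])⁴] − 3·Var(X)², equals 48 c₂² (c₁² + c₂²). In particular it is strictly positive whenever c₂ ≠ 0. -/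
/-!
Gaussian integration by parts against the density `p` of `N(0, v)`, whose derivative is
`-(x / v) p(x)`, gives the moment recursion `E[Z^(k+2)] = (k + 1) v E[Z^k]`, so that the
moments of `N(0, v)` are `(k - 1)‼ v^(k/2)` for even `k` and vanish for odd `k`.
Since `E[X] = c₀`, the centred variable `X - E[X] = c₁ Z + c₂ (Z² - 1)` is a polynomial of
degree two in `Z`, and expanding its second and fourth powers against these moments gives
`Var(X) = c₁² + 2 c₂²` and `E[(X - E[X])⁴] = 3 c₁⁴ + 60 c₁² c₂² + 60 c₂⁴`, whose difference
`E[(X - E[X])⁴] - 3 Var(X)²` is `48 c₂² (c₁² + c₂²)`.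
-/

open MeasureTheory ProbabilityTheory Matrix Nat
open scoped NNReal

namespace ProbabilityTheory

lemma hasDerivAt_gaussianPDFReal (μ : ℝ) (v : ℝ≥0) (x : ℝ) :
    HasDerivAt (gaussianPDFReal μ v) (-((x - μ) / v) * gaussianPDFReal μ v x) x := by
  have h : HasDerivAt (fun x ↦ -(x - μ) ^ 2 / (2 * v)) (-((x - μ) / v)) x := by
    refine ((((hasDerivAt_id x).sub_const μ).pow 2).neg.div_const (2 * (v : ℝ))).congr_deriv ?_
    rw [← mul_div_mul_left (x - μ) (v : ℝ) two_ne_zero]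
    simp [neg_div]
  rw [gaussianPDFReal_def]
  exact (h.exp.const_mul _).congr_deriv (by ring)

lemma integrable_gaussianPDFReal_smul_iff {E : Type*} [NormedAddCommGroup E] [NormedSpace ℝ E]
    {μ : ℝ} {v : ℝ≥0} {f : ℝ → E} (hv : v ≠ 0) :
    Integrable (fun x ↦ gaussianPDFReal μ v x • f x) ↔ Integrable f (gaussianReal μ v) := by
  rw [gaussianReal_of_var_ne_zero _ hv, integrable_withDensity_iff_integrable_smul'
    (measurable_gaussianPDF _ _) (ae_of_all _ fun _ ↦ gaussianPDF_lt_top)]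
  simp [toReal_gaussianPDF]

lemma integrable_pow_gaussianReal (μ : ℝ) (v : ℝ≥0) (n : ℕ) :
    Integrable (fun x ↦ x ^ n) (gaussianReal μ v) :=
  integrable_pow_of_mem_interior_integrableExpSet
    (by simp [integrableExpSet_fun_id_gaussianReal]) n

lemma integral_pow_add_two_gaussianReal (v : ℝ≥0) (n : ℕ) :
    ∫ x, x ^ (n + 2) ∂gaussianReal 0 v = (n + 1) * v * ∫ x, x ^ n ∂gaussianReal 0 v := by
  rcases eq_or_ne v 0 with rfl | hv
  · simp [gaussianReal_zero_var]
  simp_rw [integral_gaussianReal_eq_integral_smul hv, smul_eq_mul]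
  set p := gaussianPDFReal 0 v
  have hint (k : ℕ) : Integrable (fun x ↦ p x * x ^ k) :=
    (integrable_gaussianPDFReal_smul_iff hv).2 (integrable_pow_gaussianReal 0 v k)
  have hleft : (fun x ↦ x ^ (n + 1) * (-(x / v) * p x)) =
      fun x ↦ -(v : ℝ)⁻¹ * (p x * x ^ (n + 2)) := by
    ext x; ring
  have hright : (fun x ↦ ((n : ℝ) + 1) * x ^ n * p x) =
      fun x ↦ ((n : ℝ) + 1) * (p x * x ^ n) := by
    ext x; ring
  have ibp := integral_mul_deriv_eq_deriv_mul_of_integrable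
    (u := fun x ↦ x ^ (n + 1)) (u' := fun x ↦ ((n : ℝ) + 1) * x ^ n) (v := p)
    (v' := fun x ↦ -(x / v) * p x)
    (fun x _ ↦ by simpa using hasDerivAt_pow (n + 1) x)
    (fun x _ ↦ by simpa using hasDerivAt_gaussianPDFReal 0 v x)
    (by simpa only [Pi.mul_def, hleft] using (hint (n + 2)).const_mul _)
    (by simpa only [Pi.mul_def, hright] using (hint n).const_mul _)
    (by simpa only [Pi.mul_def, mul_comm, ← pow_succ'] using hint (n + 1))
  rw [hleft, hright, integral_const_mul, integral_const_mul] at ibp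
  have hv' : (v : ℝ) ≠ 0 := by exact_mod_cast hv
  field_simp at ibp
  linear_combination -ibp

-- For `k = 0` the truncated subtraction gives `(0 - 1)‼ = 0‼ = 1`, as it should.
lemma integral_pow_gaussianReal (v : ℝ≥0) (k : ℕ) :
    ∫ x, x ^ k ∂gaussianReal 0 v = if Even k then ((k - 1)‼ : ℝ) * v ^ (k / 2) else 0 := by
  induction k using Nat.twoStepInduction with
  | zero => simp
  | one => simp [integral_id_gaussianReal]
  | more k ih _ =>
    rw [integral_pow_add_two_gaussianReal, ih]
    by_cases hk : Even k
    · rw [if_pos hk, if_pos (hk.add even_two), show k + 2 - 1 = k + 1 by omega,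
        Nat.doubleFactorial_add_one, Nat.add_div_right _ two_pos, pow_succ]
      push_cast
      ring
    · rw [if_neg hk, if_neg (mt (fun h ↦ by simpa [Nat.even_add] using h) hk), mul_zero]

lemma integral_sum_mul_pow_gaussianReal {m : ℕ} (a : Fin m → ℝ) (μ : ℝ) (v : ℝ≥0) :
    ∫ x, ∑ i, a i * x ^ (i : ℕ) ∂gaussianReal μ v =
      ∑ i, a i * ∫ x, x ^ (i : ℕ) ∂gaussianReal μ v := by
  rw [integral_finsetSum _ fun (i : Fin m) _ ↦ (integrable_pow_gaussianReal μ v i).const_mul (a i)]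
  simp_rw [integral_const_mul]

end ProbabilityTheory

lemma integral_add_mul_sq_sub_one_gaussianReal (c₀ c₁ c₂ : ℝ) :
    ∫ z, (c₀ + c₁ * z + c₂ * (z ^ 2 - 1)) ∂gaussianReal 0 1 = c₀ := by
  have h (z : ℝ) : c₀ + c₁ * z + c₂ * (z ^ 2 - 1) =
      ∑ i : Fin 3, ![c₀ - c₂, c₁, c₂] i * z ^ (i : ℕ) := by
    simp only [Fin.sum_univ_succ, Fin.sum_univ_zero, cons_val_zero, cons_val_succ, Fin.val_zero,
      Fin.val_succ]
    ring
  simp_rw [h, integral_sum_mul_pow_gaussianReal]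
  simp [Fin.sum_univ_succ, integral_pow_gaussianReal, Nat.even_iff]

lemma integral_mul_add_mul_sq_sub_one_pow_two_gaussianReal (c₁ c₂ : ℝ) :
    ∫ z, (c₁ * z + c₂ * (z ^ 2 - 1)) ^ 2 ∂gaussianReal 0 1 = c₁ ^ 2 + 2 * c₂ ^ 2 := by
  have h (z : ℝ) : (c₁ * z + c₂ * (z ^ 2 - 1)) ^ 2 =
      ∑ i : Fin 5, ![c₂ ^ 2, -2 * c₁ * c₂, c₁ ^ 2 - 2 * c₂ ^ 2, 2 * c₁ * c₂, c₂ ^ 2] i *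
        z ^ (i : ℕ) := by
    simp only [Fin.sum_univ_succ, Fin.sum_univ_zero, cons_val_zero, cons_val_succ, Fin.val_zero,
      Fin.val_succ]
    ring
  simp_rw [h, integral_sum_mul_pow_gaussianReal]
  simp only [Fin.sum_univ_succ, Fin.sum_univ_zero, cons_val_zero, cons_val_succ, Fin.val_zero,
    Fin.val_succ, integral_pow_gaussianReal]
  norm_num [Nat.even_iff, Nat.doubleFactorial]
  ring

lemma integral_mul_add_mul_sq_sub_one_pow_four_gaussianReal (c₁ c₂ : ℝ) :
    ∫ z, (c₁ * z + c₂ * (z ^ 2 - 1)) ^ 4 ∂gaussianReal 0 1 =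
      3 * c₁ ^ 4 + 60 * c₁ ^ 2 * c₂ ^ 2 + 60 * c₂ ^ 4 := by
  have h (z : ℝ) : (c₁ * z + c₂ * (z ^ 2 - 1)) ^ 4 =
      ∑ i : Fin 9, ![c₂ ^ 4, -4 * c₁ * c₂ ^ 3, 6 * c₁ ^ 2 * c₂ ^ 2 - 4 * c₂ ^ 4,
        12 * c₁ * c₂ ^ 3 - 4 * c₁ ^ 3 * c₂, c₁ ^ 4 - 12 * c₁ ^ 2 * c₂ ^ 2 + 6 * c₂ ^ 4,
        4 * c₁ ^ 3 * c₂ - 12 * c₁ * c₂ ^ 3, 6 * c₁ ^ 2 * c₂ ^ 2 - 4 * c₂ ^ 4,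
        4 * c₁ * c₂ ^ 3, c₂ ^ 4] i * z ^ (i : ℕ) := by
    simp only [Fin.sum_univ_succ, Fin.sum_univ_zero, cons_val_zero, cons_val_succ, Fin.val_zero,
      Fin.val_succ]
    ring
  simp_rw [h, integral_sum_mul_pow_gaussianReal]
  simp only [Fin.sum_univ_succ, Fin.sum_univ_zero, cons_val_zero, cons_val_succ, Fin.val_zero,
    Fin.val_succ, integral_pow_gaussianReal]
  norm_num [Nat.even_iff, Nat.doubleFactorial]
  ring

/-- Fourth cumulant (excess kurtosis) of `X = c₀ + c₁ Z + c₂ (Z² - 1)` for standard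
Gaussian `Z`: `E[(X - E X)⁴] - 3 Var(X)² = 48 c₂² (c₁² + c₂²)`, strictly positive
whenever `c₂ ≠ 0`. -/
theorem fourth_cumulant_quadratic_feature (c₀ c₁ c₂ : ℝ) :
    (∫ z, ((c₀ + c₁ * z + c₂ * (z ^ 2 - 1)) -
          ∫ w, (c₀ + c₁ * w + c₂ * (w ^ 2 - 1)) ∂(gaussianReal 0 1)) ^ 4 ∂(gaussianReal 0 1)
        - 3 * (∫ z, ((c₀ + c₁ * z + c₂ * (z ^ 2 - 1)) -
          ∫ w, (c₀ + c₁ * w + c₂ * (w ^ 2 - 1)) ∂(gaussianReal 0 1)) ^ 2 ∂(gaussianReal 0 1)) ^ 2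
      = 48 * c₂ ^ 2 * (c₁ ^ 2 + c₂ ^ 2)) ∧
    (c₂ ≠ 0 →
      0 < ∫ z, ((c₀ + c₁ * z + c₂ * (z ^ 2 - 1)) -
          ∫ w, (c₀ + c₁ * w + c₂ * (w ^ 2 - 1)) ∂(gaussianReal 0 1)) ^ 4 ∂(gaussianReal 0 1)
        - 3 * (∫ z, ((c₀ + c₁ * z + c₂ * (z ^ 2 - 1)) -
          ∫ w, (c₀ + c₁ * w + c₂ * (w ^ 2 - 1)) ∂(gaussianReal 0 1)) ^ 2 ∂(gaussianReal 0 1)) ^ 2) := by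
  have hcentered (z : ℝ) :
      c₀ + c₁ * z + c₂ * (z ^ 2 - 1) - c₀ = c₁ * z + c₂ * (z ^ 2 - 1) := by
    ring
  simp only [integral_add_mul_sq_sub_one_gaussianReal, hcentered,
    integral_mul_add_mul_sq_sub_one_pow_two_gaussianReal,
    integral_mul_add_mul_sq_sub_one_pow_four_gaussianReal]
  have hcumulant : 3 * c₁ ^ 4 + 60 * c₁ ^ 2 * c₂ ^ 2 + 60 * c₂ ^ 4 - 3 * (c₁ ^ 2 + 2 * c₂ ^ 2) ^ 2 =
      48 * c₂ ^ 2 * (c₁ ^ 2 + c₂ ^ 2) := by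
    ring
  exact ⟨hcumulant, fun hc₂ ↦ hcumulant ▸ by positivity⟩
end
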